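/- Let r, q ∈ ℝ, E > 0, T > 0, let I ⊆ ℝ be an open interval, and let σ : I → ℝ be twice continuously differentiable. Suppose V : (0,∞) × (0,T) → ℝ has continuous partial derivatives ∂_t V, ∂_S V, ∂²_S V, ∂³_S V, ∂⁴_S V and continuous mixed partial ∂_t ∂²_S V, that S ∂²_S V(S,t) ∈ I for all (S,t), and that V satisfies the nonlinear Black–Scholes equation ∂_t V + (1/2) σ(S ∂²_S V)² S² ∂²_S V + (r−q) S ∂_S V − r V = 0 on (0,∞) × (0,T). Define H(x,τ) = E e^x · ∂²_S V(E e^x, T−τ) for x ∈ ℝ, τ ∈ (0,T), and β(h) = (1/2) σ(h)² h for h ∈ I. Then H satisfies the quasilinear parabolic equation ∂H/∂τ = ∂²/∂x² ( β(H) ) + ∂/∂x ( β(H) ) + (r−q) ∂H/∂x − q H on ℝ × (0,T). -/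

import Mathlib

/-!
On a time slice the equation reads `V_t = r V - (r - q) S V_S - S β(S V_SS)`, so differentiating
it twice in `S` expresses `∂²_S V_t` through `V_SS, …, V_SSSS` and `β', β''`. Two applications of
Peano's form of Schwarz's theorem identify `∂²_S V_t` with the given `∂_t V_SS`: first for `V`,
whose mixed partial `∂_S V_t` is continuous by the equation, then for `V_S` in the order `(t, S)`,
whose mixed partial `∂_t V_SS` is continuous by hypothesis. Under `S = E eˣ` one has
`S ∂_S = ∂_x`, so `S ∂²_S (S β) = ∂²_x β + ∂_x β` and `S ∂²_S (S V_S) = H + ∂_x H`, and multiplying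
the twice-differentiated equation by `S` gives the equation for `H`.
-/

open Filter Topology Set Real

section MixedPartials

variable {F : Type*} [NormedAddCommGroup F] [NormedSpace ℝ F]

theorem Convex.norm_image_sub_sub_smul_le {g g' : ℝ → F} {s : Set ℝ} {c : F} {C : ℝ}
    (hs : Convex ℝ s) (hg : ∀ x ∈ s, HasDerivAt g (g' x) x) (bound : ∀ x ∈ s, ‖g' x - c‖ ≤ C)
    {x y : ℝ} (hx : x ∈ s) (hy : y ∈ s) : ‖g y - g x - (y - x) • c‖ ≤ C * |y - x| := by
  have key := hs.norm_image_sub_le_of_norm_hasDerivWithin_le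
    (fun z hz => ((hg z hz).sub ((hasDerivAt_id z).smul_const c)).hasDerivWithinAt)
    (by simpa using bound) hx hy
  rw [← Real.norm_eq_abs]
  convert key using 2
  simp only [Pi.sub_apply, id_eq, sub_smul]
  abel

theorem Convex.norm_rectangle_increment_sub_le {f fb fab : ℝ → ℝ → F} {s t : Set ℝ} {L : F}
    {ε : ℝ} (hs : Convex ℝ s) (ht : Convex ℝ t)
    (hfb : ∀ x ∈ s, ∀ y ∈ t, HasDerivAt (f x ·) (fb x y) y)
    (hfab : ∀ x ∈ s, ∀ y ∈ t, HasDerivAt (fb · y) (fab x y) x)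
    (bound : ∀ x ∈ s, ∀ y ∈ t, ‖fab x y - L‖ ≤ ε)
    {a a' b b' : ℝ} (ha : a ∈ s) (ha' : a' ∈ s) (hb : b ∈ t) (hb' : b' ∈ t) :
    ‖f a' b' - f a' b - f a b' + f a b - ((a' - a) * (b' - b)) • L‖
      ≤ ε * |a' - a| * |b' - b| := by
  have hfb_diff : ∀ y ∈ t, ‖fb a' y - fb a y - (a' - a) • L‖ ≤ ε * |a' - a| := fun y hy =>
    hs.norm_image_sub_sub_smul_le (fun x hx => hfab x hx y hy) (fun x hx => bound x hx y hy)
      ha ha'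
  have := ht.norm_image_sub_sub_smul_le (g := fun y => f a' y - f a y)
    (fun y hy => (hfb a' ha' y hy).sub (hfb a ha y hy)) hfb_diff hb hb'
  convert this using 2
  rw [mul_comm, mul_smul]
  abel

/-- Peano's form of Schwarz's theorem: only the mixed partial `∂_a ∂_b f` is assumed to exist
near `(a, b)` and to be continuous there. -/
theorem hasDerivAt_swap_partial_of_continuousAt {f fa fb fab : ℝ → ℝ → F} {a b : ℝ}
    (hfa : ∀ᶠ z in 𝓝 (a, b), HasDerivAt (f · z.2) (fa z.1 z.2) z.1)
    (hfb : ∀ᶠ z in 𝓝 (a, b), HasDerivAt (f z.1 ·) (fb z.1 z.2) z.2)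
    (hfab : ∀ᶠ z in 𝓝 (a, b), HasDerivAt (fb · z.2) (fab z.1 z.2) z.1)
    (hcont : ContinuousAt (fun z : ℝ × ℝ => fab z.1 z.2) (a, b)) :
    HasDerivAt (fa a ·) (fab a b) b := by
  rw [hasDerivAt_iff_isLittleO_nhds_zero, Asymptotics.isLittleO_iff]
  intro ε hε
  -- bound the rectangle increment by `ε |h| |k|`, divide by `h` and let `h → 0`
  have hnear := (hfa.and (hfb.and hfab)).and
    (hcont.eventually (Metric.closedBall_mem_nhds (fab a b) hε))
  obtain ⟨δ, hδ, hball⟩ := Metric.eventually_nhds_iff_ball.mp hnear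
  rw [← ball_prod_same] at hball
  have hs := Metric.mem_ball_self (x := a) hδ
  filter_upwards [Metric.ball_mem_nhds 0 hδ] with k hk
  have hbk : b + k ∈ Metric.ball b δ := by simpa using hk
  have hmem : ∀ h ∈ Metric.ball (0 : ℝ) δ, a + h ∈ Metric.ball a δ := by
    intro h hh
    rw [Metric.mem_ball, Real.dist_eq] at hh ⊢
    simpa using hh
  have hincr : ∀ h ∈ Metric.ball (0 : ℝ) δ, h ≠ 0 →
      ‖h⁻¹ • (f (a + h) (b + k) - f a (b + k)) - h⁻¹ • (f (a + h) b - f a b) - k • fab a b‖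
        ≤ ε * |k| := by
    intro h hh h0
    have := (convex_ball a δ).norm_rectangle_increment_sub_le (convex_ball b δ)
      (fun x hx y hy => (hball (x, y) ⟨hx, hy⟩).1.2.1)
      (fun x hx y hy => (hball (x, y) ⟨hx, hy⟩).1.2.2)
      (fun x hx y hy => by simpa [dist_eq_norm] using (hball (x, y) ⟨hx, hy⟩).2)
      hs (hmem h hh) (Metric.mem_ball_self hδ) hbk
    have hΔ : h⁻¹ • (f (a + h) (b + k) - f a (b + k)) - h⁻¹ • (f (a + h) b - f a b) - k • fab a b
        = h⁻¹ • (f (a + h) (b + k) - f (a + h) b - f a (b + k) + f a b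
          - ((a + h - a) * (b + k - b)) • fab a b) := by
      rw [add_sub_cancel_left, add_sub_cancel_left, smul_sub _ _ ((h * k) • _), smul_smul,
        inv_mul_cancel_left₀ h0]
      module
    rw [hΔ, norm_smul, norm_inv, Real.norm_eq_abs, inv_mul_le_iff₀ (abs_pos.mpr h0)]
    simpa [mul_comm, mul_left_comm, mul_assoc] using this
  have hlim := (((hball (a, b + k) ⟨hs, hbk⟩).1.1.tendsto_slope_zero.sub
    (hball (a, b) ⟨hs, Metric.mem_ball_self hδ⟩).1.1.tendsto_slope_zero).sub_const
      (k • fab a b)).norm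
  rw [Real.norm_eq_abs]
  refine le_of_tendsto hlim ?_
  filter_upwards [self_mem_nhdsWithin, nhdsWithin_le_nhds (Metric.ball_mem_nhds 0 hδ)]
    with h h0 hh using hincr h hh h0

end MixedPartials

noncomputable section

section FluxDerivatives

variable {β w w' w'' : ℝ → ℝ} {S : ℝ}

/-- With `w, w', w''` standing for `V_SS, V_SSS, V_SSSS` on a time slice, `fluxDeriv` and
`fluxDeriv2` are the first two `S`-derivatives of `β (S * w S)`. -/
def fluxDeriv (β w w' : ℝ → ℝ) (S : ℝ) : ℝ := deriv β (S * w S) * (w S + S * w' S)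

def fluxDeriv2 (β w w' w'' : ℝ → ℝ) (S : ℝ) : ℝ :=
  deriv (deriv β) (S * w S) * (w S + S * w' S) ^ 2 + deriv β (S * w S) * (2 * w' S + S * w'' S)

theorem hasDerivAt_id_mul (hw : HasDerivAt w (w' S) S) :
    HasDerivAt (fun S => S * w S) (w S + S * w' S) S :=
  ((hasDerivAt_id' S).mul hw).congr_deriv (by ring)

theorem hasDerivAt_flux (hw : HasDerivAt w (w' S) S) (hβ : DifferentiableAt ℝ β (S * w S)) :
    HasDerivAt (fun S => β (S * w S)) (fluxDeriv β w w' S) S :=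
  hβ.hasDerivAt.comp S (hasDerivAt_id_mul hw)

theorem hasDerivAt_fluxDeriv (hw : HasDerivAt w (w' S) S) (hw' : HasDerivAt w' (w'' S) S)
    (hβ' : DifferentiableAt ℝ (deriv β) (S * w S)) :
    HasDerivAt (fluxDeriv β w w') (fluxDeriv2 β w w' w'' S) S := by
  refine ((hβ'.hasDerivAt.comp S (hasDerivAt_id_mul hw)).mul
    (hw.add (hasDerivAt_id_mul hw'))).congr_deriv ?_
  simp only [fluxDeriv2, Pi.add_apply, Function.comp_apply]
  ring

theorem ContDiffOn.differentiableAt_deriv_of_isOpen {s : Set ℝ} (hβ : ContDiffOn ℝ 2 β s)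
    (hs : IsOpen s) {u : ℝ} (hu : u ∈ s) : DifferentiableAt ℝ (deriv β) u :=
  ((hβ.deriv_of_isOpen hs (by norm_num) : ContDiffOn ℝ 1 _ _).differentiableOn
    one_ne_zero).differentiableAt (hs.mem_nhds hu)

end FluxDerivatives

section BlackScholesDerivatives

variable {r q : ℝ} {β v v1 v2 v3 v4 : ℝ → ℝ} {S : ℝ}

/-- The first two `S`-derivatives of `r V - (r - q) S V_S - S β(S V_SS)`, which by the equation are
`∂_S V_t` and `∂²_S V_t`; `v1, …, v4` stand for `V_S, …, V_SSSS` on a time slice. -/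
def dSVt (r q : ℝ) (β v1 v2 v3 : ℝ → ℝ) (S : ℝ) : ℝ :=
  r * v1 S - (r - q) * (v1 S + S * v2 S) - (β (S * v2 S) + S * fluxDeriv β v2 v3 S)

def dSSVt (r q : ℝ) (β v2 v3 v4 : ℝ → ℝ) (S : ℝ) : ℝ :=
  r * v2 S - (r - q) * (2 * v2 S + S * v3 S)
    - (2 * fluxDeriv β v2 v3 S + S * fluxDeriv2 β v2 v3 v4 S)

theorem hasDerivAt_bsRhs (hv : HasDerivAt v (v1 S) S) (hv1 : HasDerivAt v1 (v2 S) S)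
    (hv2 : HasDerivAt v2 (v3 S) S) (hβ : DifferentiableAt ℝ β (S * v2 S)) :
    HasDerivAt (fun S => r * v S - (r - q) * S * v1 S - S * β (S * v2 S))
      (dSVt r q β v1 v2 v3 S) S := by
  have := ((hv.const_mul r).sub ((hasDerivAt_id_mul hv1).const_mul (r - q))).sub
    ((hasDerivAt_id' S).mul (hasDerivAt_flux hv2 hβ))
  refine (this.congr_deriv (by rw [dSVt]; ring)).congr_of_eventuallyEq
    (Eventually.of_forall fun S => ?_)
  simp only [Pi.sub_apply, Pi.mul_apply]
  ring

theorem hasDerivAt_dSVt (hv1 : HasDerivAt v1 (v2 S) S) (hv2 : HasDerivAt v2 (v3 S) S)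
    (hv3 : HasDerivAt v3 (v4 S) S) (hβ : DifferentiableAt ℝ β (S * v2 S))
    (hβ' : DifferentiableAt ℝ (deriv β) (S * v2 S)) :
    HasDerivAt (dSVt r q β v1 v2 v3) (dSSVt r q β v2 v3 v4 S) S := by
  have := ((hv1.const_mul r).sub ((hv1.add (hasDerivAt_id_mul hv2)).const_mul (r - q))).sub
    ((hasDerivAt_flux hv2 hβ).add ((hasDerivAt_id' S).mul (hasDerivAt_fluxDeriv hv2 hv3 hβ')))
  exact this.congr_deriv (by rw [dSSVt]; ring)

end BlackScholesDerivatives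

end

theorem hasDerivAt_comp_mul_exp {g : ℝ → ℝ} {g' E x : ℝ} (hg : HasDerivAt g g' (E * exp x)) :
    HasDerivAt (fun y => g (E * exp y)) (E * exp x * g') x :=
  (hg.comp x ((hasDerivAt_exp x).const_mul E)).congr_deriv (mul_comm _ _)

section BlackScholes

variable {r q T : ℝ} {I : Set ℝ} {β : ℝ → ℝ} {V Vt VS VSS VS3 VS4 VtSS : ℝ → ℝ → ℝ}

theorem eventually_nhds_of_forall_Ioi_Ioo {P : ℝ → ℝ → Prop}
    (h : ∀ S ∈ Ioi (0 : ℝ), ∀ t ∈ Ioo 0 T, P S t) {S t : ℝ} (hS : S ∈ Ioi 0)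
    (ht : t ∈ Ioo 0 T) : ∀ᶠ z in 𝓝 (S, t), P z.1 z.2 := by
  filter_upwards [(isOpen_Ioi.prod isOpen_Ioo).mem_nhds (mk_mem_prod hS ht)] with z hz
  exact h _ hz.1 _ hz.2

theorem continuousOn_dSVt (hI : IsOpen I) (hβ : ContDiffOn ℝ 2 β I)
    (hVS_cont : ContinuousOn (fun p : ℝ × ℝ => VS p.1 p.2) (Ioi 0 ×ˢ Ioo 0 T))
    (hVSS_cont : ContinuousOn (fun p : ℝ × ℝ => VSS p.1 p.2) (Ioi 0 ×ˢ Ioo 0 T))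
    (hVS3_cont : ContinuousOn (fun p : ℝ × ℝ => VS3 p.1 p.2) (Ioi 0 ×ˢ Ioo 0 T))
    (hmem : ∀ S ∈ Ioi (0 : ℝ), ∀ t ∈ Ioo 0 T, S * VSS S t ∈ I) :
    ContinuousOn (fun p : ℝ × ℝ => dSVt r q β (VS · p.2) (VSS · p.2) (VS3 · p.2) p.1)
      (Ioi 0 ×ˢ Ioo 0 T) := by
  have hu : ContinuousOn (fun p : ℝ × ℝ => p.1 * VSS p.1 p.2) (Ioi 0 ×ˢ Ioo 0 T) :=
    continuousOn_fst.mul hVSS_cont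
  have hmaps : MapsTo (fun p : ℝ × ℝ => p.1 * VSS p.1 p.2) (Ioi 0 ×ˢ Ioo 0 T) I :=
    fun p hp => hmem _ hp.1 _ hp.2
  have hβu := hβ.continuousOn.comp hu hmaps
  have hβ'u := (hβ.continuousOn_deriv_of_isOpen hI (by norm_num)).comp hu hmaps
  exact ((continuousOn_const.mul hVS_cont).sub (continuousOn_const.mul (hVS_cont.add hu))).sub
    (hβu.add (continuousOn_fst.mul (hβ'u.mul (hVSS_cont.add (continuousOn_fst.mul hVS3_cont)))))

theorem hasDerivAt_Vt_S (hI : IsOpen I) (hβ : ContDiffOn ℝ 2 β I)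
    (hVS : ∀ S ∈ Ioi (0 : ℝ), ∀ t ∈ Ioo 0 T, HasDerivAt (fun S' => V S' t) (VS S t) S)
    (hVSS : ∀ S ∈ Ioi (0 : ℝ), ∀ t ∈ Ioo 0 T, HasDerivAt (fun S' => VS S' t) (VSS S t) S)
    (hVS3 : ∀ S ∈ Ioi (0 : ℝ), ∀ t ∈ Ioo 0 T, HasDerivAt (fun S' => VSS S' t) (VS3 S t) S)
    (hmem : ∀ S ∈ Ioi (0 : ℝ), ∀ t ∈ Ioo 0 T, S * VSS S t ∈ I)
    (hPDE : ∀ S ∈ Ioi (0 : ℝ), ∀ t ∈ Ioo 0 T,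
      Vt S t = r * V S t - (r - q) * S * VS S t - S * β (S * VSS S t))
    {S t : ℝ} (hS : S ∈ Ioi 0) (ht : t ∈ Ioo 0 T) :
    HasDerivAt (Vt · t) (dSVt r q β (VS · t) (VSS · t) (VS3 · t) S) S := by
  have hβS : DifferentiableAt ℝ β (S * VSS S t) :=
    (hβ.differentiableOn (by norm_num)).differentiableAt (hI.mem_nhds (hmem S hS t ht))
  refine (hasDerivAt_bsRhs (hVS S hS t ht) (hVSS S hS t ht) (hVS3 S hS t ht)
    hβS).congr_of_eventuallyEq ?_
  filter_upwards [isOpen_Ioi.mem_nhds hS] with S' hS' using hPDE S' hS' t ht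

theorem hasDerivAt_VS_t (hI : IsOpen I) (hβ : ContDiffOn ℝ 2 β I)
    (hVt : ∀ S ∈ Ioi (0 : ℝ), ∀ t ∈ Ioo 0 T, HasDerivAt (fun t' => V S t') (Vt S t) t)
    (hVS : ∀ S ∈ Ioi (0 : ℝ), ∀ t ∈ Ioo 0 T, HasDerivAt (fun S' => V S' t) (VS S t) S)
    (hVSS : ∀ S ∈ Ioi (0 : ℝ), ∀ t ∈ Ioo 0 T, HasDerivAt (fun S' => VS S' t) (VSS S t) S)
    (hVS3 : ∀ S ∈ Ioi (0 : ℝ), ∀ t ∈ Ioo 0 T, HasDerivAt (fun S' => VSS S' t) (VS3 S t) S)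
    (hVS_cont : ContinuousOn (fun p : ℝ × ℝ => VS p.1 p.2) (Ioi 0 ×ˢ Ioo 0 T))
    (hVSS_cont : ContinuousOn (fun p : ℝ × ℝ => VSS p.1 p.2) (Ioi 0 ×ˢ Ioo 0 T))
    (hVS3_cont : ContinuousOn (fun p : ℝ × ℝ => VS3 p.1 p.2) (Ioi 0 ×ˢ Ioo 0 T))
    (hmem : ∀ S ∈ Ioi (0 : ℝ), ∀ t ∈ Ioo 0 T, S * VSS S t ∈ I)
    (hPDE : ∀ S ∈ Ioi (0 : ℝ), ∀ t ∈ Ioo 0 T,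
      Vt S t = r * V S t - (r - q) * S * VS S t - S * β (S * VSS S t))
    {S t : ℝ} (hS : S ∈ Ioi 0) (ht : t ∈ Ioo 0 T) :
    HasDerivAt (VS S ·) (dSVt r q β (VS · t) (VSS · t) (VS3 · t) S) t :=
  hasDerivAt_swap_partial_of_continuousAt (f := V)
    (fab := fun S t => dSVt r q β (VS · t) (VSS · t) (VS3 · t) S)
    (eventually_nhds_of_forall_Ioi_Ioo hVS hS ht)
    (eventually_nhds_of_forall_Ioi_Ioo hVt hS ht)
    (eventually_nhds_of_forall_Ioi_Ioo
      (fun _ hS _ ht => hasDerivAt_Vt_S hI hβ hVS hVSS hVS3 hmem hPDE hS ht) hS ht)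
    ((continuousOn_dSVt hI hβ hVS_cont hVSS_cont hVS3_cont hmem).continuousAt
      ((isOpen_Ioi.prod isOpen_Ioo).mem_nhds (mk_mem_prod hS ht)))

theorem VtSS_eq_dSSVt (hI : IsOpen I) (hβ : ContDiffOn ℝ 2 β I)
    (hVt : ∀ S ∈ Ioi (0 : ℝ), ∀ t ∈ Ioo 0 T, HasDerivAt (fun t' => V S t') (Vt S t) t)
    (hVS : ∀ S ∈ Ioi (0 : ℝ), ∀ t ∈ Ioo 0 T, HasDerivAt (fun S' => V S' t) (VS S t) S)
    (hVSS : ∀ S ∈ Ioi (0 : ℝ), ∀ t ∈ Ioo 0 T, HasDerivAt (fun S' => VS S' t) (VSS S t) S)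
    (hVS3 : ∀ S ∈ Ioi (0 : ℝ), ∀ t ∈ Ioo 0 T, HasDerivAt (fun S' => VSS S' t) (VS3 S t) S)
    (hVS4 : ∀ S ∈ Ioi (0 : ℝ), ∀ t ∈ Ioo 0 T, HasDerivAt (fun S' => VS3 S' t) (VS4 S t) S)
    (hVtSS : ∀ S ∈ Ioi (0 : ℝ), ∀ t ∈ Ioo 0 T, HasDerivAt (fun t' => VSS S t') (VtSS S t) t)
    (hVS_cont : ContinuousOn (fun p : ℝ × ℝ => VS p.1 p.2) (Ioi 0 ×ˢ Ioo 0 T))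
    (hVSS_cont : ContinuousOn (fun p : ℝ × ℝ => VSS p.1 p.2) (Ioi 0 ×ˢ Ioo 0 T))
    (hVS3_cont : ContinuousOn (fun p : ℝ × ℝ => VS3 p.1 p.2) (Ioi 0 ×ˢ Ioo 0 T))
    (hVtSS_cont : ContinuousOn (fun p : ℝ × ℝ => VtSS p.1 p.2) (Ioi 0 ×ˢ Ioo 0 T))
    (hmem : ∀ S ∈ Ioi (0 : ℝ), ∀ t ∈ Ioo 0 T, S * VSS S t ∈ I)
    (hPDE : ∀ S ∈ Ioi (0 : ℝ), ∀ t ∈ Ioo 0 T,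
      Vt S t = r * V S t - (r - q) * S * VS S t - S * β (S * VSS S t))
    {S t : ℝ} (hS : S ∈ Ioi 0) (ht : t ∈ Ioo 0 T) :
    VtSS S t = dSSVt r q β (VSS · t) (VS3 · t) (VS4 · t) S := by
  have hu : S * VSS S t ∈ I := hmem S hS t ht
  have hβS : DifferentiableAt ℝ β (S * VSS S t) :=
    (hβ.differentiableOn (by norm_num)).differentiableAt (hI.mem_nhds hu)
  have hswap {P : ℝ → ℝ → Prop} (h : ∀ S ∈ Ioi (0 : ℝ), ∀ t ∈ Ioo 0 T, P S t) :
      ∀ᶠ z in 𝓝 (t, S), P z.2 z.1 :=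
    (continuous_swap.tendsto (t, S)).eventually (eventually_nhds_of_forall_Ioi_Ioo h hS ht)
  have hGS_S := hasDerivAt_swap_partial_of_continuousAt (f := fun t S => VS S t)
    (fa := fun t S => dSVt r q β (VS · t) (VSS · t) (VS3 · t) S) (fb := fun t S => VSS S t)
    (fab := fun t S => VtSS S t)
    (hswap fun _ hS _ ht => hasDerivAt_VS_t hI hβ hVt hVS hVSS hVS3 hVS_cont hVSS_cont hVS3_cont
      hmem hPDE hS ht)
    (hswap hVSS) (hswap hVtSS)
    (ContinuousAt.comp (f := Prod.swap)
      (hVtSS_cont.continuousAt ((isOpen_Ioi.prod isOpen_Ioo).mem_nhds (mk_mem_prod hS ht)))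
      continuous_swap.continuousAt)
  exact hGS_S.unique (hasDerivAt_dSVt (hVSS S hS t ht) (hVS3 S hS t ht) (hVS4 S hS t ht) hβS
    (hβ.differentiableAt_deriv_of_isOpen hI hu))

end BlackScholes

theorem gamma_transformation_quasilinear_general
    (r q E T : ℝ) (hE : 0 < E)
    (I : Set ℝ) (hI_open : IsOpen I)
    (σ : ℝ → ℝ) (hσ : ContDiffOn ℝ 2 σ I)
    (V Vt VS VSS VS3 VS4 VtSS : ℝ → ℝ → ℝ)
    -- existence of the partial derivatives on (0,∞) × (0,T)
    (hVt : ∀ S ∈ Set.Ioi (0 : ℝ), ∀ t ∈ Set.Ioo 0 T,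
      HasDerivAt (fun t' => V S t') (Vt S t) t)
    (hVS : ∀ S ∈ Set.Ioi (0 : ℝ), ∀ t ∈ Set.Ioo 0 T,
      HasDerivAt (fun S' => V S' t) (VS S t) S)
    (hVSS : ∀ S ∈ Set.Ioi (0 : ℝ), ∀ t ∈ Set.Ioo 0 T,
      HasDerivAt (fun S' => VS S' t) (VSS S t) S)
    (hVS3 : ∀ S ∈ Set.Ioi (0 : ℝ), ∀ t ∈ Set.Ioo 0 T,
      HasDerivAt (fun S' => VSS S' t) (VS3 S t) S)
    (hVS4 : ∀ S ∈ Set.Ioi (0 : ℝ), ∀ t ∈ Set.Ioo 0 T,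
      HasDerivAt (fun S' => VS3 S' t) (VS4 S t) S)
    (hVtSS : ∀ S ∈ Set.Ioi (0 : ℝ), ∀ t ∈ Set.Ioo 0 T,
      HasDerivAt (fun t' => VSS S t') (VtSS S t) t)
    -- continuity of the partial derivatives on (0,∞) × (0,T)
    (hVS_cont : ContinuousOn (fun p : ℝ × ℝ => VS p.1 p.2)
      (Set.Ioi 0 ×ˢ Set.Ioo 0 T))
    (hVSS_cont : ContinuousOn (fun p : ℝ × ℝ => VSS p.1 p.2)
      (Set.Ioi 0 ×ˢ Set.Ioo 0 T))
    (hVS3_cont : ContinuousOn (fun p : ℝ × ℝ => VS3 p.1 p.2)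
      (Set.Ioi 0 ×ˢ Set.Ioo 0 T))
    (hVtSS_cont : ContinuousOn (fun p : ℝ × ℝ => VtSS p.1 p.2)
      (Set.Ioi 0 ×ˢ Set.Ioo 0 T))
    -- S ∂²_S V stays in the domain I of σ
    (hmem : ∀ S ∈ Set.Ioi (0 : ℝ), ∀ t ∈ Set.Ioo 0 T, S * VSS S t ∈ I)
    -- the nonlinear Black–Scholes equation
    (hPDE : ∀ S ∈ Set.Ioi (0 : ℝ), ∀ t ∈ Set.Ioo 0 T,
      Vt S t + 1 / 2 * (σ (S * VSS S t)) ^ 2 * S ^ 2 * VSS S t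
          + (r - q) * S * VS S t - r * V S t = 0)
    (H : ℝ → ℝ → ℝ)
    (hH : ∀ x τ : ℝ, H x τ = E * Real.exp x * VSS (E * Real.exp x) (T - τ))
    (β : ℝ → ℝ) (hβ : ∀ h : ℝ, β h = 1 / 2 * (σ h) ^ 2 * h) :
    ∀ x : ℝ, ∀ τ ∈ Set.Ioo (0 : ℝ) T,
      deriv (fun τ' => H x τ') τ
        = deriv (fun y => deriv (fun z => β (H z τ)) y) x
          + deriv (fun y => β (H y τ)) x
          + (r - q) * deriv (fun y => H y τ) x
          - q * H x τ := by
  have hβC2 : ContDiffOn ℝ 2 β I := by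
    rw [funext hβ]
    exact (contDiffOn_const.mul (hσ.pow 2)).mul contDiffOn_id
  have hPDEβ : ∀ S ∈ Ioi (0 : ℝ), ∀ t ∈ Ioo 0 T,
      Vt S t = r * V S t - (r - q) * S * VS S t - S * β (S * VSS S t) := by
    intro S hS t ht
    rw [hβ]
    linear_combination hPDE S hS t ht
  intro x τ hτ
  simp only [hH]
  set t := T - τ
  have ht : t ∈ Ioo 0 T := ⟨by linarith [hτ.2], by linarith [hτ.1]⟩
  have hS (y : ℝ) : E * exp y ∈ Ioi 0 := mem_Ioi.mpr (by positivity)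
  have hI_nhds (y : ℝ) := hI_open.mem_nhds (hmem _ (hS y) t ht)
  have hH_τ : HasDerivAt (fun τ => E * exp x * VSS (E * exp x) (T - τ))
      (E * exp x * (VtSS (E * exp x) t * -1)) τ :=
    ((hVtSS _ (hS x) t ht).comp τ ((hasDerivAt_id' τ).const_sub T)).const_mul _
  have hH_x := hasDerivAt_comp_mul_exp (hasDerivAt_id_mul (w' := (VS3 · t)) (hVS3 _ (hS x) t ht))
  have hβH_x (y : ℝ) := hasDerivAt_comp_mul_exp (hasDerivAt_flux (w' := (VS3 · t))
    (hVS3 _ (hS y) t ht) ((hβC2.differentiableOn two_ne_zero).differentiableAt (hI_nhds y)))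
  have hβH_xx := hasDerivAt_comp_mul_exp (hasDerivAt_id_mul
    (hasDerivAt_fluxDeriv (w := (VSS · t)) (w' := (VS3 · t)) (w'' := (VS4 · t))
      (hVS3 _ (hS x) t ht) (hVS4 _ (hS x) t ht)
      (hβC2.differentiableAt_deriv_of_isOpen hI_open (hmem _ (hS x) t ht))))
  rw [hH_τ.deriv, funext fun y => (hβH_x y).deriv]
  beta_reduce
  rw [hβH_xx.deriv, hH_x.deriv,
    VtSS_eq_dSSVt hI_open hβC2 hVt hVS hVSS hVS3 hVS4 hVtSS hVS_cont hVSS_cont hVS3_cont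
      hVtSS_cont hmem hPDEβ (hS x) ht]
  simp only [dSSVt]
  ring

/-- equation (8) of the paper, Jandačka–Ševčovič transformation:
the change of variables H = S ∂²_S V, x = ln(S/E), τ = T−t converts the
nonlinear Black–Scholes equation with volatility σ(S ∂²_S V) into a
porous-media-type quasilinear parabolic equation with flux β(H) = σ(H)² H / 2. -/
theorem gamma_transformation_quasilinear
    (r q E T : ℝ) (hE : 0 < E) (hT : 0 < T)
    (I : Set ℝ) (hI_open : IsOpen I) (hI_conn : I.OrdConnected)
    (σ : ℝ → ℝ) (hσ : ContDiffOn ℝ 2 σ I)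
    (V Vt VS VSS VS3 VS4 VtSS : ℝ → ℝ → ℝ)
    -- existence of the partial derivatives on (0,∞) × (0,T)
    (hVt : ∀ S ∈ Set.Ioi (0 : ℝ), ∀ t ∈ Set.Ioo 0 T,
      HasDerivAt (fun t' => V S t') (Vt S t) t)
    (hVS : ∀ S ∈ Set.Ioi (0 : ℝ), ∀ t ∈ Set.Ioo 0 T,
      HasDerivAt (fun S' => V S' t) (VS S t) S)
    (hVSS : ∀ S ∈ Set.Ioi (0 : ℝ), ∀ t ∈ Set.Ioo 0 T,
      HasDerivAt (fun S' => VS S' t) (VSS S t) S)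
    (hVS3 : ∀ S ∈ Set.Ioi (0 : ℝ), ∀ t ∈ Set.Ioo 0 T,
      HasDerivAt (fun S' => VSS S' t) (VS3 S t) S)
    (hVS4 : ∀ S ∈ Set.Ioi (0 : ℝ), ∀ t ∈ Set.Ioo 0 T,
      HasDerivAt (fun S' => VS3 S' t) (VS4 S t) S)
    (hVtSS : ∀ S ∈ Set.Ioi (0 : ℝ), ∀ t ∈ Set.Ioo 0 T,
      HasDerivAt (fun t' => VSS S t') (VtSS S t) t)
    -- continuity of the partial derivatives on (0,∞) × (0,T)
    (hVt_cont : ContinuousOn (fun p : ℝ × ℝ => Vt p.1 p.2)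
      (Set.Ioi 0 ×ˢ Set.Ioo 0 T))
    (hVS_cont : ContinuousOn (fun p : ℝ × ℝ => VS p.1 p.2)
      (Set.Ioi 0 ×ˢ Set.Ioo 0 T))
    (hVSS_cont : ContinuousOn (fun p : ℝ × ℝ => VSS p.1 p.2)
      (Set.Ioi 0 ×ˢ Set.Ioo 0 T))
    (hVS3_cont : ContinuousOn (fun p : ℝ × ℝ => VS3 p.1 p.2)
      (Set.Ioi 0 ×ˢ Set.Ioo 0 T))
    (hVS4_cont : ContinuousOn (fun p : ℝ × ℝ => VS4 p.1 p.2)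
      (Set.Ioi 0 ×ˢ Set.Ioo 0 T))
    (hVtSS_cont : ContinuousOn (fun p : ℝ × ℝ => VtSS p.1 p.2)
      (Set.Ioi 0 ×ˢ Set.Ioo 0 T))
    -- S ∂²_S V stays in the domain I of σ
    (hmem : ∀ S ∈ Set.Ioi (0 : ℝ), ∀ t ∈ Set.Ioo 0 T, S * VSS S t ∈ I)
    -- the nonlinear Black–Scholes equation
    (hPDE : ∀ S ∈ Set.Ioi (0 : ℝ), ∀ t ∈ Set.Ioo 0 T,
      Vt S t + 1 / 2 * (σ (S * VSS S t)) ^ 2 * S ^ 2 * VSS S t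
          + (r - q) * S * VS S t - r * V S t = 0)
    (H : ℝ → ℝ → ℝ)
    (hH : ∀ x τ : ℝ, H x τ = E * Real.exp x * VSS (E * Real.exp x) (T - τ))
    (β : ℝ → ℝ) (hβ : ∀ h : ℝ, β h = 1 / 2 * (σ h) ^ 2 * h) :
    ∀ x : ℝ, ∀ τ ∈ Set.Ioo (0 : ℝ) T,
      deriv (fun τ' => H x τ') τ
        = deriv (fun y => deriv (fun z => β (H z τ)) y) x
          + deriv (fun y => β (H y τ)) x
          + (r - q) * deriv (fun y => H y τ) x
          - q * H x τ :=
  gamma_transformation_quasilinear_general r q E T hE I hI_open σ hσ V Vt VS VSS VS3 VS4 VtSS hVt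
    hVS hVSS hVS3 hVS4 hVtSS hVS_cont hVSS_cont hVS3_cont hVtSS_cont hmem hPDE H hH β hβ
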